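/- The braided crossed-module condition d(a)▷b = a_(1) ((a_(2))^(1)▷b) S_B((a_(2))^(2)) holds for all a, b ∈ B if and only if ((d(a_(1))(a_(2))^(1))▷b)(a_(2))^(2) = ab holds for all a, b ∈ B, i.e. if and only if B is braided commutative as an algebra with respect to the coaction Δ_L(b) = d(b_(1))(b_(2))^(1) ⊗ (b_(2))^(2) induced by d. (Lemma 3.3(i).) -/

import Mathlib

open TensorProduct

noncomputable section

variable (k H B : Type*) [Field k] [Ring H] [HopfAlgebra k H]
  [Ring B] [Algebra k B] [Coalgebra k B]

/-- The coaction on `B` induced by `d`: `Δ_L(b) = d(b₁)(b₂)⁽¹⁾ ⊗ (b₂)⁽²⁾`. -/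
def DLind (δ : B →ₗ[k] H ⊗[k] B) (d : B →ₗ[k] H) : B →ₗ[k] H ⊗[k] B :=
  map (LinearMap.mul' k H) LinearMap.id
    ∘ₗ (TensorProduct.assoc k H H B).symm.toLinearMap
    ∘ₗ map d δ
    ∘ₗ (Coalgebra.comul : B →ₗ[k] B ⊗[k] B)

/-- The data of a braided Hopf crossed module: `B` is a Hopf algebra in the braided
category of crossed `H`-modules via the action `act` and coaction `δ`, with braided
antipode `SB`, and `d : B → H` is a twisted Hopf algebra map satisfying
`d(h▷b) = h₁ d(b) S(h₂)`. -/
structure BraidedHopfPrecrossedModule (act : H ⊗[k] B →ₗ[k] B) (δ : B →ₗ[k] H ⊗[k] B)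
    (SB : B →ₗ[k] B) (d : B →ₗ[k] H) : Prop where
  /-- `(hg)▷b = h▷(g▷b)` -/
  act_mul : ∀ (h g : H) (b : B), act ((h * g) ⊗ₜ[k] b) = act (h ⊗ₜ[k] act (g ⊗ₜ[k] b))
  /-- `1▷b = b` -/
  act_one : ∀ b : B, act ((1 : H) ⊗ₜ[k] b) = b
  /-- module algebra: `h▷(ab) = (h₁▷a)(h₂▷b)` -/
  act_mul_alg : act ∘ₗ map LinearMap.id (LinearMap.mul' k B)
      = LinearMap.mul' k B ∘ₗ map act act
          ∘ₗ (tensorTensorTensorComm k H H B B).toLinearMap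
          ∘ₗ map (Coalgebra.comul : H →ₗ[k] H ⊗[k] H) LinearMap.id
  /-- module algebra: `h▷1 = ε(h)1` -/
  act_unit : ∀ h : H, act (h ⊗ₜ[k] (1 : B)) = (Coalgebra.counit h : k) • (1 : B)
  /-- module coalgebra: `Δ(h▷b) = (h₁▷b₁)⊗(h₂▷b₂)` -/
  act_comul : (Coalgebra.comul : B →ₗ[k] B ⊗[k] B) ∘ₗ act
      = map act act ∘ₗ (tensorTensorTensorComm k H H B B).toLinearMap
          ∘ₗ map (Coalgebra.comul : H →ₗ[k] H ⊗[k] H) (Coalgebra.comul : B →ₗ[k] B ⊗[k] B)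
  /-- module coalgebra: `ε(h▷b) = ε(h)ε(b)` -/
  act_counit : ∀ (h : H) (b : B),
      (Coalgebra.counit (act (h ⊗ₜ[k] b)) : k) = Coalgebra.counit h * Coalgebra.counit b
  /-- `δ` is a coassociative left coaction -/
  coact_coassoc : (TensorProduct.assoc k H H B).toLinearMap
        ∘ₗ map (Coalgebra.comul : H →ₗ[k] H ⊗[k] H) LinearMap.id ∘ₗ δ
      = map LinearMap.id δ ∘ₗ δ
  /-- `δ` is counital -/
  coact_counit : (TensorProduct.lid k B).toLinearMap
        ∘ₗ map (Coalgebra.counit : H →ₗ[k] k) LinearMap.id ∘ₗ δ = LinearMap.id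
  /-- comodule algebra: `δ(ab) = a⁽¹⁾b⁽¹⁾ ⊗ a⁽²⁾b⁽²⁾` -/
  comod_alg : δ ∘ₗ LinearMap.mul' k B
      = map (LinearMap.mul' k H) (LinearMap.mul' k B)
          ∘ₗ (tensorTensorTensorComm k H B H B).toLinearMap ∘ₗ map δ δ
  /-- comodule algebra: `δ(1) = 1⊗1` -/
  comod_one : δ 1 = (1 : H) ⊗ₜ[k] (1 : B)
  /-- comodule coalgebra: `b⁽¹⁾ ⊗ Δ(b⁽²⁾) = (b₁)⁽¹⁾(b₂)⁽¹⁾ ⊗ (b₁)⁽²⁾ ⊗ (b₂)⁽²⁾` -/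
  comod_comul : map LinearMap.id (Coalgebra.comul : B →ₗ[k] B ⊗[k] B) ∘ₗ δ
      = map (LinearMap.mul' k H) LinearMap.id
          ∘ₗ (tensorTensorTensorComm k H B H B).toLinearMap
          ∘ₗ map δ δ ∘ₗ (Coalgebra.comul : B →ₗ[k] B ⊗[k] B)
  /-- crossed (Yetter–Drinfeld) compatibility:
  `δ(h▷b) = h₁ b⁽¹⁾ S(h₂) ⊗ (h₃▷b⁽²⁾)` -/
  yd_compat : δ ∘ₗ act
      = map (LinearMap.mul' k H) LinearMap.id
          ∘ₗ (TensorProduct.assoc k H H B).symm.toLinearMap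
          ∘ₗ map (LinearMap.mul' k H)
              (map (HopfAlgebra.antipode (R := k) : H →ₗ[k] H) act
                ∘ₗ (TensorProduct.assoc k H H B).toLinearMap)
          ∘ₗ (tensorTensorTensorComm k H (H ⊗[k] H) H B).toLinearMap
          ∘ₗ map (map LinearMap.id (Coalgebra.comul : H →ₗ[k] H ⊗[k] H)
                ∘ₗ (Coalgebra.comul : H →ₗ[k] H ⊗[k] H)) δ
  /-- braided multiplicativity of the coproduct:
  `Δ(ab) = a₁((a₂)⁽¹⁾▷b₁) ⊗ (a₂)⁽²⁾b₂` -/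
  braided_comul_mul : (Coalgebra.comul : B →ₗ[k] B ⊗[k] B) ∘ₗ LinearMap.mul' k B
      = map (LinearMap.mul' k B ∘ₗ map LinearMap.id act
              ∘ₗ (TensorProduct.assoc k B H B).toLinearMap)
            (LinearMap.mul' k B)
          ∘ₗ (tensorTensorTensorComm k (B ⊗[k] H) B B B).toLinearMap
          ∘ₗ map ((TensorProduct.assoc k B H B).symm.toLinearMap
                ∘ₗ map LinearMap.id δ ∘ₗ (Coalgebra.comul : B →ₗ[k] B ⊗[k] B))
              (Coalgebra.comul : B →ₗ[k] B ⊗[k] B)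
  /-- braided antipode: `S_B(b₁) b₂ = ε(b)1` -/
  SB_left : LinearMap.mul' k B ∘ₗ map SB LinearMap.id
        ∘ₗ (Coalgebra.comul : B →ₗ[k] B ⊗[k] B)
      = Algebra.linearMap k B ∘ₗ (Coalgebra.counit : B →ₗ[k] k)
  /-- braided antipode: `b₁ S_B(b₂) = ε(b)1` -/
  SB_right : LinearMap.mul' k B ∘ₗ map LinearMap.id SB
        ∘ₗ (Coalgebra.comul : B →ₗ[k] B ⊗[k] B)
      = Algebra.linearMap k B ∘ₗ (Coalgebra.counit : B →ₗ[k] k)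
  /-- `d` is an algebra map -/
  d_mul : ∀ a b : B, d (a * b) = d a * d b
  /-- `d(1) = 1` -/
  d_one : d 1 = 1
  /-- twisted Hopf-map condition: `Δ_H(d(b)) = d(b₁)(b₂)⁽¹⁾ ⊗ d((b₂)⁽²⁾)` -/
  d_comul : (Coalgebra.comul : H →ₗ[k] H ⊗[k] H) ∘ₗ d
      = map (LinearMap.mul' k H) LinearMap.id
          ∘ₗ (TensorProduct.assoc k H H H).symm.toLinearMap
          ∘ₗ map d (map LinearMap.id d ∘ₗ δ)
          ∘ₗ (Coalgebra.comul : B →ₗ[k] B ⊗[k] B)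
  /-- twisted Hopf-map condition: `ε(d(b)) = ε(b)` -/
  d_counit : (Coalgebra.counit : H →ₗ[k] k) ∘ₗ d = (Coalgebra.counit : B →ₗ[k] k)
  /-- `d(h▷b) = h₁ d(b) S(h₂)` -/
  d_act : d ∘ₗ act = LinearMap.mul' k H
      ∘ₗ map LinearMap.id (LinearMap.mul' k H
            ∘ₗ map LinearMap.id (HopfAlgebra.antipode (R := k) : H →ₗ[k] H)
            ∘ₗ (TensorProduct.comm k H H).toLinearMap)
      ∘ₗ (TensorProduct.assoc k H H H).toLinearMap
      ∘ₗ map (Coalgebra.comul : H →ₗ[k] H ⊗[k] H) d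

/-!
Write `A(a,b) = a₁((a₂)⁽¹⁾▷b)S_B((a₂)⁽²⁾)` and `C(a,b) = ((d(a₁)(a₂)⁽¹⁾)▷b)(a₂)⁽²⁾`.
Coassociativity and the comodule-coalgebra axiom give

  `a₁ ⊗ (a₂)⁽¹⁾ ⊗ Δ((a₂)⁽²⁾) = a₁₁ ⊗ (a₁₂)⁽¹⁾(a₂)⁽¹⁾ ⊗ (a₁₂)⁽²⁾ ⊗ (a₂)⁽²⁾`.

Evaluate both sides on `x ⊗ h ⊗ y ⊗ z ↦ x(h▷b)S_B(y)z`. On the left, the antipode axiom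
collapses the sum to `ab`. On the right, `(hg)▷b = h▷(g▷b)` turns it into
`∑ A(a₁, (a₂)⁽¹⁾▷b)(a₂)⁽²⁾`, which is `C(a,b)` if `A(a,c) = d(a)▷c` for all `c`. For the
converse, evaluate on `x ⊗ h ⊗ y ⊗ z ↦ (d(x)▷(h▷b)) y S_B(z)`. Here the left side is
`d(a)▷b`, and the right side is `∑ C(a₁, (a₂)⁽¹⁾▷b) S_B((a₂)⁽²⁾)`, which is `A(a,b)` when `C`
is `(a,c) ↦ ac`.

Both collapses need `b⁽¹⁾ε(b⁽²⁾) = ε(b)1`, which is not among the axioms. It holds in the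
convolution algebra `Hom(B, H)`: the twisted Hopf-map condition gives `d * (id ⊗ ε)δ = d`,
and `(d ∘ S_B) * d = 1` because `d` is multiplicative.
-/

namespace BraidedHopfPrecrossedModule

open Coalgebra WithConv
open LinearMap (mul' lTensor rTensor)

variable {k H B}

def coactionCounit (δ : B →ₗ[k] H ⊗[k] B) : B →ₗ[k] H :=
  (TensorProduct.rid k H).toLinearMap ∘ₗ lTensor H counit ∘ₗ δ

def tensorCoaction (δ : B →ₗ[k] H ⊗[k] B) : B ⊗[k] B →ₗ[k] H ⊗[k] (B ⊗[k] B) :=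
  map (mul' k H) LinearMap.id ∘ₗ (tensorTensorTensorComm k H B H B).toLinearMap ∘ₗ map δ δ

omit [Coalgebra k B] in
lemma tensorCoaction_tmul {δ : B →ₗ[k] H ⊗[k] B} {x y : B} {V U : Finset (H × B)}
    (hx : δ x = ∑ q ∈ V, q.1 ⊗ₜ[k] q.2) (hy : δ y = ∑ p ∈ U, p.1 ⊗ₜ[k] p.2) :
    tensorCoaction δ (x ⊗ₜ y) = ∑ q ∈ V, ∑ p ∈ U, (q.1 * p.1) ⊗ₜ (q.2 ⊗ₜ p.2) := by
  simpa [tensorCoaction, hx, hy, sum_tmul, tmul_sum] using Finset.sum_comm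

/-- `x ⊗ h ⊗ y ⊗ z ↦ x (h▷b) S_B(y) z` -/
def antipodeLeftForm (act : H ⊗[k] B →ₗ[k] B) (SB : B →ₗ[k] B) (b : B) :
    B ⊗[k] (H ⊗[k] (B ⊗[k] B)) →ₗ[k] B :=
  mul' k B ∘ₗ lTensor B (mul' k B
    ∘ₗ map (act ∘ₗ (TensorProduct.mk k H B).flip b) (mul' k B ∘ₗ rTensor B SB))

/-- `x ⊗ h ⊗ y ⊗ z ↦ (d(x)▷(h▷b)) y S_B(z)` -/
def antipodeRightForm (act : H ⊗[k] B →ₗ[k] B) (SB : B →ₗ[k] B) (d : B →ₗ[k] H) (b : B) :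
    B ⊗[k] (H ⊗[k] (B ⊗[k] B)) →ₗ[k] B :=
  mul' k B ∘ₗ map (act ∘ₗ map d (act ∘ₗ (TensorProduct.mk k H B).flip b))
    (mul' k B ∘ₗ map LinearMap.id SB) ∘ₗ (TensorProduct.assoc k B H (B ⊗[k] B)).symm.toLinearMap

variable {act : H ⊗[k] B →ₗ[k] B} {δ : B →ₗ[k] H ⊗[k] B} {SB : B →ₗ[k] B} {d : B →ₗ[k] H}
  (hbcm : BraidedHopfPrecrossedModule k H B act δ SB d)
include hbcm

lemma d_comp_antipode_convMul_d : toConv (d ∘ₗ SB) * toConv d = 1 := by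
  have hd : mul' k H ∘ₗ map (d ∘ₗ SB) d = d ∘ₗ mul' k B ∘ₗ map SB LinearMap.id := by
    ext x y
    simp [hbcm.d_mul]
  ext c
  have := congr(($hd ∘ₗ comul) c)
  simp only [LinearMap.comp_assoc, hbcm.SB_left] at this
  simpa [LinearMap.convMul_def, hbcm.d_one, Algebra.algebraMap_eq_smul_one] using this

lemma d_convMul_coactionCounit : toConv d * toConv (coactionCounit δ) = toConv d := by
  ext c
  let r := Repr.arbitrary k c
  choose U hU using fun i : B × B => TensorProduct.exists_finset (R := k) (δ (r.right i))
  have hdε (z : B) : counit (R := k) (d z) = counit z := LinearMap.congr_fun hbcm.d_counit z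
  have hd := congr(((TensorProduct.rid k H).toLinearMap ∘ₗ lTensor H counit ∘ₗ $hbcm.d_comul) c)
  simp only [LinearMap.comp_apply, lTensor_counit_comul] at hd
  rw [← r.eq] at hd
  simp only [r.convMul_apply, coactionCounit, hU, hdε, LinearEquiv.coe_coe, LinearMap.coe_comp,
    Function.comp_apply, map_sum, map_tmul, tmul_sum, assoc_symm_tmul, LinearMap.id_coe, id_eq,
    LinearMap.mul'_apply, LinearMap.lTensor_tmul, rid_tmul, one_smul] at hd ⊢
  simp [hd, Finset.mul_sum]

lemma coactionCounit_eq : coactionCounit δ = Algebra.linearMap k H ∘ₗ counit := by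
  have h : toConv (coactionCounit δ) = 1 := calc
    _ = (toConv (d ∘ₗ SB) * toConv d) * toConv (coactionCounit δ) := by
      rw [hbcm.d_comp_antipode_convMul_d, one_mul]
    _ = 1 := by rw [mul_assoc, hbcm.d_convMul_coactionCounit, hbcm.d_comp_antipode_convMul_d]
  exact congr(ofConv $h)

lemma mul'_map_counit_comp_coaction {A : Type*} [Ring A] [Algebra k A] (g : H →ₗ[k] A) :
    mul' k A ∘ₗ map g (Algebra.linearMap k A ∘ₗ counit) ∘ₗ δ
      = g ∘ₗ Algebra.linearMap k H ∘ₗ counit := by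
  rw [← hbcm.coactionCounit_eq]
  ext y
  obtain ⟨U, hU⟩ := TensorProduct.exists_finset (R := k) (δ y)
  simp [coactionCounit, hU, Algebra.algebraMap_eq_smul_one]

lemma lTensor_coaction_comul_eq_tensorCoaction (a : B) :
    lTensor B (lTensor H comul ∘ₗ δ) (comul a)
      = lTensor B (tensorCoaction δ) (TensorProduct.assoc k B B B (rTensor B comul (comul a))) := by
  have h : lTensor H comul ∘ₗ δ = tensorCoaction δ ∘ₗ comul := by
    simpa only [tensorCoaction, LinearMap.comp_assoc, LinearMap.lTensor_def] using hbcm.comod_comul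
  rw [h, LinearMap.lTensor_comp, LinearMap.comp_apply, ← coassoc_apply]

lemma antipodeLeftForm_lTensor_coaction_comul (a b : B) :
    antipodeLeftForm act SB b (lTensor B (lTensor H comul ∘ₗ δ) (comul a)) = a * b := by
  let actb := act ∘ₗ (TensorProduct.mk k H B).flip b
  have h : mul' k B ∘ₗ map actb (mul' k B ∘ₗ rTensor B SB) ∘ₗ lTensor H comul
      = mul' k B ∘ₗ map actb (Algebra.linearMap k B ∘ₗ counit) := by
    rw [LinearMap.map_comp_lTensor, LinearMap.comp_assoc, LinearMap.rTensor_def, hbcm.SB_left]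
  calc antipodeLeftForm act SB b (lTensor B (lTensor H comul ∘ₗ δ) (comul a))
      = mul' k B (lTensor B ((mul' k B ∘ₗ map actb (mul' k B ∘ₗ rTensor B SB)
          ∘ₗ lTensor H comul) ∘ₗ δ) (comul a)) := by
        simp only [antipodeLeftForm, LinearMap.lTensor_comp, LinearMap.comp_apply, actb]
    _ = mul' k B (lTensor B (actb ∘ₗ Algebra.linearMap k H ∘ₗ counit) (comul a)) := by
        rw [h, LinearMap.comp_assoc, hbcm.mul'_map_counit_comp_coaction]
    _ = a * b := by
        simp [actb, LinearMap.lTensor_comp, lTensor_counit_comul, hbcm.act_one]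

lemma antipodeRightForm_lTensor_coaction_comul (a b : B) :
    antipodeRightForm act SB d b (lTensor B (lTensor H comul ∘ₗ δ) (comul a)) = act (d a ⊗ₜ b) := by
  have key (x y : B) : antipodeRightForm act SB d b (x ⊗ₜ lTensor H comul (δ y))
      = counit (R := k) y • act (d x ⊗ₜ b) := by
    let g := act ∘ₗ TensorProduct.mk k H B (d x) ∘ₗ act ∘ₗ (TensorProduct.mk k H B).flip b
    have hx : antipodeRightForm act SB d b ∘ₗ TensorProduct.mk k B _ x
        = mul' k B ∘ₗ map g (mul' k B ∘ₗ map LinearMap.id SB) := by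
      ext h y z
      simp [antipodeRightForm, g]
    have hg : mul' k B ∘ₗ map g (mul' k B ∘ₗ map LinearMap.id SB) ∘ₗ lTensor H comul
        = mul' k B ∘ₗ map g (Algebra.linearMap k B ∘ₗ counit) := by
      rw [LinearMap.map_comp_lTensor, LinearMap.comp_assoc, hbcm.SB_right]
    have := congr(($hg ∘ₗ δ) y)
    simp only [LinearMap.comp_assoc, hbcm.mul'_map_counit_comp_coaction] at this
    rw [← TensorProduct.mk_apply, ← LinearMap.comp_apply, hx]
    simpa [g, hbcm.act_one, Algebra.algebraMap_eq_smul_one, ← smul_tmul', tmul_smul] using this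
  have hX (X : B ⊗[k] B) :
      antipodeRightForm act SB d b (lTensor B (lTensor H comul ∘ₗ δ) X)
        = act (d (TensorProduct.rid k B (lTensor B counit X)) ⊗ₜ b) := by
    induction X using TensorProduct.induction_on with
    | zero => simp
    | tmul x y => simp [key, ← smul_tmul']
    | add X Y hX hY => simp only [map_add, hX, hY, add_tmul]
  simp [hX, lTensor_counit_comul]

lemma antipodeLeftForm_lTensor_tensorCoaction
    (hA : ∀ a c : B, act (d a ⊗ₜ[k] c) = mul' k B (map LinearMap.id
      (mul' k B ∘ₗ map (act ∘ₗ (TensorProduct.mk k H B).flip c) SB ∘ₗ δ) (comul a)))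
    (b : B) (Y : B ⊗[k] B) :
    antipodeLeftForm act SB b
        (lTensor B (tensorCoaction δ) (TensorProduct.assoc k B B B (rTensor B comul Y)))
      = mul' k B (map (act ∘ₗ (TensorProduct.mk k H B).flip b) LinearMap.id
          (map (mul' k H) LinearMap.id ((TensorProduct.assoc k H H B).symm (map d δ Y)))) := by
  induction Y using TensorProduct.induction_on with
  | zero => simp
  | add Y Z hY hZ => simp only [map_add, hY, hZ]
  | tmul x y =>
    obtain ⟨U, hU⟩ := TensorProduct.exists_finset (R := k) (δ y)
    let t := Repr.arbitrary k x
    choose V hV using fun m : B × B => TensorProduct.exists_finset (R := k) (δ (t.right m))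
    have hx := hA x
    rw [← t.eq] at hx
    rw [LinearMap.rTensor_tmul, ← t.eq]
    simp only [antipodeLeftForm, hU, hV, tensorCoaction_tmul (hV _) hU, LinearMap.lTensor_tmul,
      LinearMap.coe_comp, Function.comp_apply, LinearMap.flip_apply, LinearMap.mul'_apply,
      LinearMap.id_coe, id_eq, map_sum, map_tmul, tmul_sum, sum_tmul, mk_apply, assoc_tmul,
      assoc_symm_tmul] at hx ⊢
    simp only [hbcm.act_mul, hx, Finset.sum_mul, mul_assoc]
    rw [Finset.sum_comm (s := U)]
    exact Finset.sum_congr rfl fun m _ => Finset.sum_comm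

lemma antipodeRightForm_lTensor_tensorCoaction
    (hC : ∀ a c : B, mul' k B (map (act ∘ₗ (TensorProduct.mk k H B).flip c)
      LinearMap.id (DLind k H B δ d a)) = a * c)
    (b : B) (Y : B ⊗[k] B) :
    antipodeRightForm act SB d b
        (lTensor B (tensorCoaction δ) (TensorProduct.assoc k B B B (rTensor B comul Y)))
      = mul' k B (map LinearMap.id
          (mul' k B ∘ₗ map (act ∘ₗ (TensorProduct.mk k H B).flip b) SB ∘ₗ δ) Y) := by
  induction Y using TensorProduct.induction_on with
  | zero => simp
  | add Y Z hY hZ => simp only [map_add, hY, hZ]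
  | tmul x y =>
    obtain ⟨U, hU⟩ := TensorProduct.exists_finset (R := k) (δ y)
    let t := Repr.arbitrary k x
    choose V hV using fun m : B × B => TensorProduct.exists_finset (R := k) (δ (t.right m))
    have hx := hC x
    rw [DLind, LinearMap.comp_apply, LinearMap.comp_apply, LinearMap.comp_apply, ← t.eq] at hx
    rw [LinearMap.rTensor_tmul, ← t.eq]
    simp only [antipodeRightForm, hU, hV, tensorCoaction_tmul (hV _) hU, LinearMap.lTensor_tmul,
      LinearEquiv.coe_coe, LinearMap.coe_comp, Function.comp_apply, LinearMap.flip_apply,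
      LinearMap.mul'_apply, LinearMap.id_coe, id_eq, map_sum, map_tmul, tmul_sum, sum_tmul,
      mk_apply, assoc_tmul, assoc_symm_tmul] at hx ⊢
    simp only [← mul_assoc]
    simp only [← hx, hbcm.act_mul, Finset.sum_mul]
    rw [Finset.sum_comm (s := U)]
    exact Finset.sum_congr rfl fun m _ => Finset.sum_comm

end BraidedHopfPrecrossedModule

open BraidedHopfPrecrossedModule Coalgebra

theorem statement19 (act : H ⊗[k] B →ₗ[k] B) (δ : B →ₗ[k] H ⊗[k] B)
    (SB : B →ₗ[k] B) (d : B →ₗ[k] H)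
    (hbcm : BraidedHopfPrecrossedModule k H B act δ SB d) :
    (∀ a b : B,
      act (d a ⊗ₜ[k] b)
        = LinearMap.mul' k B
            (map LinearMap.id
              (LinearMap.mul' k B
                ∘ₗ map (act ∘ₗ (TensorProduct.mk k H B).flip b) SB ∘ₗ δ)
              (Coalgebra.comul a)))
    ↔ (∀ a b : B,
      LinearMap.mul' k B
          (map (act ∘ₗ (TensorProduct.mk k H B).flip b) LinearMap.id
            (DLind k H B δ d a))
        = a * b) := by
  refine ⟨fun hA a b => ?_, fun hC a b => ?_⟩
  · calc _ = antipodeLeftForm act SB b (LinearMap.lTensor B (tensorCoaction δ)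
          (TensorProduct.assoc k B B B (LinearMap.rTensor B comul (comul a)))) :=
          (antipodeLeftForm_lTensor_tensorCoaction hbcm hA b (comul a)).symm
      _ = a * b := by
          rw [← hbcm.lTensor_coaction_comul_eq_tensorCoaction,
            hbcm.antipodeLeftForm_lTensor_coaction_comul]
  · calc act (d a ⊗ₜ b) = antipodeRightForm act SB d b (LinearMap.lTensor B (tensorCoaction δ)
          (TensorProduct.assoc k B B B (LinearMap.rTensor B comul (comul a)))) := by
          rw [← hbcm.lTensor_coaction_comul_eq_tensorCoaction,
            hbcm.antipodeRightForm_lTensor_coaction_comul]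
      _ = _ := antipodeRightForm_lTensor_tensorCoaction hbcm hC b (comul a)
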